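/- arXiv:2210.05237 — 2 statements merged into one kernel-verified Lean document; each statement's English description precedes it below -/
import Mathlib

section
/- With m = 2 resources, for every n and every rational α ∈ (0, 1/2], the fair approximation ratio for social welfare of the DRF mechanism over instances with minority ratio α equals 2 − α. Precisely: (i) for every instance with minority ratio α, every feasible allocation satisfying SI and EF has social welfare at most (2 − α) times the social welfare of the DRF allocation; and (ii) for every ε > 0 there exists an instance with minority ratio α and a feasible allocation satisfying SI and EF whose social welfare is at least (2 − α − ε) times the social welfare of the DRF allocation. -/
open Finset
open scoped Classical

/-- A valid instance: all demands lie in `(0,1]` and every agent has a resource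
with normalized demand `1` (its dominant resource). -/
def ValidInstance {n m : ℕ} (d : Fin n → Fin m → ℝ) : Prop :=
  (∀ i r, 0 < d i r ∧ d i r ≤ 1) ∧ ∀ i, ∃ r, d i r = 1

/-- Entrywise nonnegative allocation. -/
def NonnegAlloc {n m : ℕ} (A : Fin n → Fin m → ℝ) : Prop := ∀ i r, 0 ≤ A i r

/-- A feasible allocation: nonnegative and no resource over-allocated. -/
def Feasible {n m : ℕ} (A : Fin n → Fin m → ℝ) : Prop :=
  NonnegAlloc A ∧ ∀ r, ∑ i, A i r ≤ 1

/-- Leontief utility of a bundle `Av` for demand vector `dv`: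
the largest `y ≥ 0` with `y * dv r ≤ Av r` for all `r`. -/
noncomputable def util {m : ℕ} (dv Av : Fin m → ℝ) : ℝ :=
  sSup {y : ℝ | 0 ≤ y ∧ ∀ r, y * dv r ≤ Av r}

/-- Share incentive: every agent gets utility at least `1/n`. -/
def SI {n m : ℕ} (d A : Fin n → Fin m → ℝ) : Prop :=
  ∀ i, (1 : ℝ) / n ≤ util (d i) (A i)

/-- Envy-freeness: no agent prefers another agent's bundle. -/
def EF {n m : ℕ} (d A : Fin n → Fin m → ℝ) : Prop :=
  ∀ i j, util (d i) (A j) ≤ util (d i) (A i)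

/-- Social welfare: the sum of all utilities. -/
noncomputable def SW {n m : ℕ} (d A : Fin n → Fin m → ℝ) : ℝ :=
  ∑ i, util (d i) (A i)

/-- Utilization: the minimum over resources of the total allocated amount. -/
noncomputable def Util {n m : ℕ} (A : Fin n → Fin m → ℝ) : ℝ :=
  ⨅ r : Fin m, ∑ i, A i r

/-- Pareto optimality of an allocation. -/
def PO {n m : ℕ} (d A : Fin n → Fin m → ℝ) : Prop :=
  ¬ ∃ A' : Fin n → Fin m → ℝ, Feasible A' ∧
      (∀ i, util (d i) (A i) ≤ util (d i) (A' i)) ∧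
      ∃ i, util (d i) (A i) < util (d i) (A' i)

/-- Agents whose dominant resource is resource 1 (index `0`). -/
noncomputable def G1 {n m : ℕ} [NeZero m] (d : Fin n → Fin m → ℝ) : Finset (Fin n) :=
  Finset.univ.filter (fun i => d i 0 = 1)

/-- Agents whose demand for resource 1 (index `0`) is below `1`. -/
noncomputable def G2 {n m : ℕ} [NeZero m] (d : Fin n → Fin m → ℝ) : Finset (Fin n) :=
  Finset.univ.filter (fun i => d i 0 < 1)

/-- Minority ratio `α = |G2| / n` for two resources. -/
def MinorityRatio {n : ℕ} (d : Fin n → Fin 2 → ℝ) (α : ℚ) : Prop :=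
  ((G2 d).card : ℚ) = α * n

/-- The DRF allocation: every agent gets `x* • d i` with
`x* = 1 / max_r Σ_j d j r`. -/
noncomputable def DRF {n m : ℕ} (d : Fin n → Fin m → ℝ) : Fin n → Fin m → ℝ :=
  fun i r => (1 / ⨆ r' : Fin m, ∑ j, d j r') * d i r

/-- The F1 allocation at water level `t`: agents in `G1` get dominant share `1/n`;
an agent `i` with `d i 0 < 1` gets `max (d i 0 / n) t` of resource 1, i.e. has
scale factor `max (1/n) (t / d i 0)`. -/
noncomputable def F1At {n m : ℕ} [NeZero m] (d : Fin n → Fin m → ℝ) (t : ℝ) :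
    Fin n → Fin m → ℝ :=
  fun i r => (if d i 0 = 1 then (1 : ℝ) / n else max ((1 : ℝ) / n) (t / d i 0)) * d i r

/-- The F1 allocation: F1 at the largest feasible water level. -/
noncomputable def F1 {n m : ℕ} [NeZero m] (d : Fin n → Fin m → ℝ) : Fin n → Fin m → ℝ :=
  F1At d (sSup {t : ℝ | 0 ≤ t ∧ Feasible (F1At d t)})

/-!
Let `K = α n`, let `C` be the demand of `G2` for resource `0` and `D` that of `G1` for
resource `1`. Agents of `G1` are dominant on resource `0`, and under SI every agent of `G2`
consumes at least `1 / n` times its demand for it, so `G1` has welfare at most `1 - C / n`;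
symmetrically `G2` has welfare at most `1 - D / n`. DRF has welfare `n / S` where `S` is
`n - K + C` or `K + D`, and `(2n - C - D) S ≤ (2n - K) n` in both cases.

For tightness, the agents `i < k` form `G2` and demand `(1 - b, 1)`, except agent `0`, who
demands `((1 - b) / n, 1)`; the others form `G1` and demand `(1, b)`. Everybody but agent `0` receives its SI share, and agent `0`
gets what is left of resource `1`; since it takes almost nothing of resource `0`, nobody
envies it. The welfare is about `2 - α` while DRF's is about `1` as `b → 0`, `n → ∞`.
-/

section Utility

variable {m : ℕ} {dv Av : Fin m → ℝ}

theorem util_le_div {r : Fin m} (hd : 0 < dv r) (hA : 0 ≤ Av r) : util dv Av ≤ Av r / dv r :=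
  Real.sSup_le (fun _ hy => (le_div_iff₀ hd).2 (hy.2 r)) (div_nonneg hA hd.le)

theorem util_mul_le {r : Fin m} (hd : 0 < dv r) (hA : 0 ≤ Av r) : util dv Av * dv r ≤ Av r :=
  (le_div_iff₀ hd).1 (util_le_div hd hA)

theorem util_le_of_eq_one {r : Fin m} (hd : dv r = 1) (hA : 0 ≤ Av r) : util dv Av ≤ Av r := by
  simpa [hd] using util_le_div (hd ▸ one_pos : 0 < dv r) hA

theorem util_mul_self [NeZero m] (hd : ∀ r, 0 < dv r) {c : ℝ} (hc : 0 ≤ c) :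
    util dv (fun r => c * dv r) = c := by
  refine le_antisymm ((util_le_div (hd 0) (by positivity [hd 0])).trans_eq ?_) ?_
  · field_simp [(hd 0).ne']
  · refine le_csSup ⟨c, fun y hy => le_of_mul_le_mul_right (hy.2 0) (hd 0)⟩ ⟨hc, fun _ => le_rfl⟩

end Utility

section Welfare

variable {n m : ℕ} {d A : Fin n → Fin m → ℝ}

theorem sum_util_add_sum_compl_div_le_one (hd : ∀ i r, 0 < d i r) (hA : Feasible A)
    (hSI : SI d A) (r : Fin m) (s : Finset (Fin n)) (hs : ∀ i ∈ s, d i r = 1) :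
    ∑ i ∈ s, util (d i) (A i) + (∑ i ∈ sᶜ, d i r) / n ≤ 1 :=
  calc ∑ i ∈ s, util (d i) (A i) + (∑ i ∈ sᶜ, d i r) / n
      = ∑ i ∈ s, util (d i) (A i) * d i r + ∑ i ∈ sᶜ, 1 / n * d i r := by
        rw [sum_div]
        congr 1
        · exact sum_congr rfl fun i hi => by rw [hs i hi, mul_one]
        · exact sum_congr rfl fun i _ => by ring
    _ ≤ ∑ i ∈ s, util (d i) (A i) * d i r + ∑ i ∈ sᶜ, util (d i) (A i) * d i r := by
        gcongr with i
        · exact (hd i r).le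
        · exact hSI i
    _ = ∑ i, util (d i) (A i) * d i r := sum_add_sum_compl s _
    _ ≤ ∑ i, A i r := sum_le_sum fun i _ => util_mul_le (hd i r) (hA.1 i r)
    _ ≤ 1 := hA.2 r

theorem sum_eq_card_add_sum_compl (r : Fin m) (s : Finset (Fin n)) (hs : ∀ i ∈ s, d i r = 1) :
    ∑ j, d j r = s.card + ∑ i ∈ sᶜ, d i r := by
  rw [← sum_add_sum_compl s, sum_congr rfl hs, sum_const, nsmul_one]

theorem SW_DRF [NeZero m] (hd : ∀ i r, 0 < d i r) :
    SW d (DRF d) = n / ⨆ r, ∑ j, d j r := by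
  have hS : 0 ≤ ⨆ r, ∑ j, d j r :=
    (sum_nonneg fun j _ => (hd j 0).le).trans
      (le_ciSup (Set.finite_range fun r => ∑ j, d j r).bddAbove 0)
  have hutil i : util (d i) (DRF d i) = 1 / ⨆ r, ∑ j, d j r :=
    util_mul_self (hd i) (by positivity)
  rw [SW, sum_congr rfl fun i _ => hutil i, sum_const, card_univ,
    Fintype.card_fin, nsmul_eq_mul, mul_one_div]

end Welfare

section Groups

variable {n m : ℕ} [NeZero m] {d : Fin n → Fin m → ℝ}

theorem compl_G1 (hd : ∀ i, d i 0 ≤ 1) : (G1 d)ᶜ = G2 d := by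
  ext i
  simp [G1, G2, lt_iff_le_and_ne, hd i]

theorem compl_G2 (hd : ∀ i, d i 0 ≤ 1) : (G2 d)ᶜ = G1 d := by
  rw [← compl_G1 hd, compl_compl]

theorem card_G1 (hd : ∀ i, d i 0 ≤ 1) : ((G1 d).card : ℝ) = n - (G2 d).card := by
  rw [eq_sub_iff_add_eq, ← compl_G1 hd]
  exact_mod_cast (card_add_card_compl (G1 d)).trans (Fintype.card_fin n)

end Groups

section TwoResources

variable {n : ℕ} {d A : Fin n → Fin 2 → ℝ}

theorem demand_eq_one_of_mem_G2 (hd : ValidInstance d) {i : Fin n} (hi : i ∈ G2 d) :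
    d i 1 = 1 := by
  obtain ⟨r, hr⟩ := hd.2 i
  fin_cases r
  · exact absurd hr (mem_filter.1 hi).2.ne
  · exact hr

theorem SW_le_two_sub (hd : ValidInstance d) (hA : Feasible A) (hSI : SI d A) :
    SW d A ≤ 2 - (∑ i ∈ G2 d, d i 0 + ∑ i ∈ G1 d, d i 1) / n := by
  have hpos i r : 0 < d i r := (hd.1 i r).1
  have hu := sum_util_add_sum_compl_div_le_one hpos hA hSI 0 (G1 d) fun i hi => (mem_filter.1 hi).2
  have hv := sum_util_add_sum_compl_div_le_one hpos hA hSI 1 (G2 d) fun i hi =>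
    demand_eq_one_of_mem_G2 hd hi
  rw [compl_G1 fun i => (hd.1 i 0).2] at hu
  rw [compl_G2 fun i => (hd.1 i 0).2] at hv
  rw [SW, ← sum_add_sum_compl (G1 d), compl_G1 fun i => (hd.1 i 0).2, add_div]
  linarith

theorem sum_demand_zero (hd : ValidInstance d) :
    ∑ j, d j 0 = n - (G2 d).card + ∑ i ∈ G2 d, d i 0 := by
  rw [sum_eq_card_add_sum_compl 0 (G1 d) fun i hi => (mem_filter.1 hi).2,
    compl_G1 fun i => (hd.1 i 0).2, card_G1 fun i => (hd.1 i 0).2]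

theorem sum_demand_one (hd : ValidInstance d) :
    ∑ j, d j 1 = (G2 d).card + ∑ i ∈ G1 d, d i 1 := by
  rw [sum_eq_card_add_sum_compl 1 (G2 d) fun i hi => demand_eq_one_of_mem_G2 hd hi,
    compl_G2 fun i => (hd.1 i 0).2]

end TwoResources

theorem two_mul_sub_sub_mul_le {N K C D S : ℝ} (hC0 : 0 ≤ C) (hCK : C ≤ K) (hD0 : 0 ≤ D)
    (hDK : D ≤ N - K) (hKN : 2 * K ≤ N) (hS : S = N - K + C ∨ S = K + D) :
    (2 * N - C - D) * S ≤ (2 * N - K) * N := by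
  rcases hS with rfl | rfl
  · nlinarith [mul_nonneg (by linarith : 0 ≤ N - C) (by linarith : 0 ≤ K - C),
      mul_nonneg hD0 (by linarith : 0 ≤ N - K + C)]
  · nlinarith [mul_nonneg (by linarith : 0 ≤ N - K - D) (by linarith : 0 ≤ N - D),
      mul_nonneg (by linarith : 0 ≤ N) (by linarith : 0 ≤ N - 2 * K),
      mul_nonneg hC0 (by linarith : 0 ≤ K + D)]

theorem SW_le_two_sub_mul_SW_DRF {α : ℚ} (hα : α ≤ 1 / 2) {n : ℕ} (hn : 0 < n)
    {d A : Fin n → Fin 2 → ℝ} (hd : ValidInstance d) (hmr : MinorityRatio d α)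
    (hA : Feasible A) (hSI : SI d A) : SW d A ≤ (2 - α) * SW d (DRF d) := by
  have hpos i r : 0 < d i r := (hd.1 i r).1
  have hK : ((G2 d).card : ℝ) = α * n := by exact_mod_cast congrArg (Rat.cast : ℚ → ℝ) hmr
  have hα' : (α : ℝ) ≤ 1 / 2 := by
    rw [show (1 / 2 : ℝ) = ((1 / 2 : ℚ) : ℝ) by norm_num]; exact_mod_cast hα
  have hCK : ∑ i ∈ G2 d, d i 0 ≤ (G2 d).card := by
    simpa using sum_le_card_nsmul (G2 d) (d · 0) 1 fun i _ => (hd.1 i 0).2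
  have hDK : ∑ i ∈ G1 d, d i 1 ≤ n - (G2 d).card := by
    simpa [card_G1 fun i => (hd.1 i 0).2] using
      sum_le_card_nsmul (G1 d) (d · 1) 1 fun i _ => (hd.1 i 1).2
  obtain ⟨r, hr⟩ := exists_eq_ciSup_of_finite (f := fun r => ∑ j, d j r)
  have hS := two_mul_sub_sub_mul_le (sum_nonneg fun i _ => (hpos i 0).le) hCK
    (sum_nonneg fun i _ => (hpos i 1).le) hDK (by nlinarith) (S := ∑ j, d j r) (by
      fin_cases r
      · exact .inl (sum_demand_zero hd)
      · exact .inr (sum_demand_one hd))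
  have hSpos : 0 < ∑ j, d j r := sum_pos (fun j _ => hpos j r) (univ_nonempty_iff.2 ⟨⟨0, hn⟩⟩)
  have hn' : (0 : ℝ) < n := Nat.cast_pos.2 hn
  rw [SW_DRF hpos, ← hr, mul_div_assoc', le_div_iff₀ hSpos]
  calc SW d A * ∑ j, d j r
      ≤ (2 - (∑ i ∈ G2 d, d i 0 + ∑ i ∈ G1 d, d i 1) / n) * ∑ j, d j r :=
        mul_le_mul_of_nonneg_right (SW_le_two_sub hd hA hSI) hSpos.le
    _ = (2 * n - ∑ i ∈ G2 d, d i 0 - ∑ i ∈ G1 d, d i 1) * (∑ j, d j r) / n := by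
        field_simp; ring
    _ ≤ (2 * n - (G2 d).card) * n / n := by gcongr
    _ = (2 - α) * n := by rw [hK]; field_simp

theorem sum_range_eq_of_blocks {k n : ℕ} (hk : 1 ≤ k) (hkn : k ≤ n) {f : ℕ → ℝ} {a x z : ℝ}
    (h0 : f 0 = a) (hx : ∀ i ∈ Ico 1 k, f i = x) (hz : ∀ i ∈ Ico k n, f i = z) :
    ∑ i ∈ range n, f i = a + (k - 1) * x + (n - k) * z := by
  rw [← sum_range_add_sum_Ico f hkn, sum_range_eq_add_Ico f hk, h0, sum_congr rfl hx,
    sum_congr rfl hz]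
  simp [Nat.cast_sub hk, Nat.cast_sub hkn]

noncomputable def tightDemand (n k : ℕ) (b : ℝ) (i : ℕ) : Fin 2 → ℝ :=
  if i = 0 then ![(1 - b) / n, 1] else if i < k then ![1 - b, 1] else ![1, b]

noncomputable def tightShare (n k : ℕ) (b : ℝ) (i : ℕ) : ℝ :=
  if i = 0 then 1 - ((k : ℝ) - 1) / n - (n - k) * b / n else 1 / n

noncomputable def tightInstance (n k : ℕ) (b : ℝ) : Fin n → Fin 2 → ℝ :=
  fun i => tightDemand n k b i

noncomputable def tightAlloc (n k : ℕ) (b : ℝ) : Fin n → Fin 2 → ℝ :=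
  fun i r => tightShare n k b i * tightDemand n k b i r

section Tight

variable {n k : ℕ} {b : ℝ}

theorem tightDemand_zero : tightDemand n k b 0 = ![(1 - b) / n, 1] := if_pos rfl

theorem tightDemand_of_lt {i : ℕ} (h0 : i ≠ 0) (hi : i < k) :
    tightDemand n k b i = ![1 - b, 1] := by
  simp [tightDemand, h0, hi]

theorem tightDemand_of_le {i : ℕ} (h0 : i ≠ 0) (hi : k ≤ i) : tightDemand n k b i = ![1, b] := by
  simp [tightDemand, h0, not_lt.2 hi]

theorem tightShare_zero : tightShare n k b 0 = 1 - ((k : ℝ) - 1) / n - (n - k) * b / n := if_pos rfl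

theorem tightShare_of_ne_zero {i : ℕ} (hi : i ≠ 0) : tightShare n k b i = 1 / n := if_neg hi

theorem one_div_le_tightShare (hkn : k ≤ n) (hb1 : b ≤ 1) (i : ℕ) : 1 / n ≤ tightShare n k b i := by
  rcases eq_or_ne i 0 with rfl | hi
  · rcases (Nat.zero_le n).eq_or_lt with hn | hn
    · simp [tightShare, ← hn]
    have hkn' : (k : ℝ) ≤ n := by exact_mod_cast hkn
    have : tightShare n k b 0 - 1 / n = (n - k) * (1 - b) / n := by
      rw [tightShare_zero]; field_simp; ring
    have : 0 ≤ (n - k) * (1 - b) / n := by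
      apply div_nonneg (mul_nonneg _ _) <;> linarith
    linarith
  · rw [tightShare_of_ne_zero hi]

theorem tightShare_zero_le_one (hk : 1 ≤ k) (hkn : k ≤ n) (hb0 : 0 ≤ b) :
    tightShare n k b 0 ≤ 1 := by
  have hk' : (1 : ℝ) ≤ k := by exact_mod_cast hk
  have hkn' : (k : ℝ) ≤ n := by exact_mod_cast hkn
  rw [tightShare_zero]
  have : 0 ≤ ((k : ℝ) - 1) / n := div_nonneg (by linarith) (by linarith)
  have : 0 ≤ (n - k) * b / n := div_nonneg (mul_nonneg (by linarith) hb0) (by linarith)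
  linarith

theorem tightDemand_mem_Ioc (hn : 0 < n) (hb0 : 0 < b) (hb1 : b < 1) (i : ℕ) (r : Fin 2) :
    tightDemand n k b i r ∈ Set.Ioc 0 1 := by
  have hn' : (1 : ℝ) ≤ n := by exact_mod_cast hn
  have h : (1 - b) / n ≤ 1 := (div_le_self (by linarith) hn').trans (by linarith)
  rcases eq_or_ne i 0 with rfl | h0
  · rw [tightDemand_zero]; fin_cases r <;> simp [h, hb1, hn]
  rcases lt_or_ge i k with hi | hi
  · rw [tightDemand_of_lt h0 hi]; fin_cases r <;> simp [hb0.le, hb1]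
  · rw [tightDemand_of_le h0 hi]; fin_cases r <;> simp [hb0, hb1.le]

theorem exists_tightDemand_eq_one (i : ℕ) : ∃ r, tightDemand n k b i r = 1 := by
  rcases eq_or_ne i 0 with rfl | h0
  · exact ⟨1, by simp [tightDemand_zero]⟩
  rcases lt_or_ge i k with hi | hi
  · exact ⟨1, by simp [tightDemand_of_lt h0 hi]⟩
  · exact ⟨0, by simp [tightDemand_of_le h0 hi]⟩

theorem tightDemand_zero_lt_one_iff (hn : 0 < n) (hk : 1 ≤ k) (hb0 : 0 < b) (i : ℕ) :
    tightDemand n k b i 0 < 1 ↔ i < k := by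
  rcases eq_or_ne i 0 with rfl | h0
  · have hn' : (1 : ℝ) ≤ n := by exact_mod_cast hn
    rw [tightDemand_zero, Matrix.cons_val_zero]
    exact iff_of_true ((div_lt_one (by linarith)).2 (by linarith)) hk
  rcases lt_or_ge i k with hi | hi
  · simp [tightDemand_of_lt h0 hi, hi, hb0]
  · simp [tightDemand_of_le h0 hi, not_lt.2 hi]

theorem one_sub_le_tightDemand (hb0 : 0 ≤ b) {i : ℕ} (h0 : i ≠ 0) :
    1 - b ≤ tightDemand n k b i 0 := by
  rcases lt_or_ge i k with hi | hi
  · simp [tightDemand_of_lt h0 hi]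
  · simp [tightDemand_of_le h0 hi, hb0]

theorem sum_tight (hk : 1 ≤ k) (hkn : k ≤ n) (g : ℝ → (Fin 2 → ℝ) → ℝ) :
    ∑ i : Fin n, g (tightShare n k b i) (tightDemand n k b i) =
      g (tightShare n k b 0) ![(1 - b) / n, 1] + (k - 1) * g (1 / n) ![1 - b, 1] +
        (n - k) * g (1 / n) ![1, b] := by
  rw [Fin.sum_univ_eq_sum_range (fun i => g (tightShare n k b i) (tightDemand n k b i)) n]
  refine sum_range_eq_of_blocks hk hkn (by rw [tightDemand_zero]) (fun i hi => ?_) fun i hi => ?_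
  all_goals obtain ⟨hi₁, hi₂⟩ := mem_Ico.1 hi
  · rw [tightShare_of_ne_zero (by omega), tightDemand_of_lt (by omega) hi₂]
  · rw [tightShare_of_ne_zero (by omega), tightDemand_of_le (by omega) hi₁]

theorem tightInstance_valid (hb0 : 0 < b) (hb1 : b < 1) : ValidInstance (tightInstance n k b) :=
  ⟨fun i r => tightDemand_mem_Ioc i.pos hb0 hb1 i r, fun i => exists_tightDemand_eq_one i⟩

theorem card_G2_tightInstance (hk : 1 ≤ k) (hkn : k ≤ n) (hb0 : 0 < b) :
    (G2 (tightInstance n k b)).card = k := by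
  have : G2 (tightInstance n k b) = univ.filter fun i : Fin n => (i : ℕ) < k :=
    filter_congr fun i _ => tightDemand_zero_lt_one_iff i.pos hk hb0 i
  rw [this, Fin.card_filter_val_lt, min_eq_right hkn]

theorem util_tightAlloc (hkn : k ≤ n) (hb0 : 0 < b) (hb1 : b < 1) (i : Fin n) :
    util (tightInstance n k b i) (tightAlloc n k b i) = tightShare n k b i :=
  util_mul_self (fun r => (tightDemand_mem_Ioc i.pos hb0 hb1 i r).1)
    ((one_div_pos.2 (Nat.cast_pos.2 i.pos)).le.trans (one_div_le_tightShare hkn hb1.le i))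

theorem tightAlloc_feasible (hk : 1 ≤ k) (hkn : k ≤ n) (hb0 : 0 < b) (hb1 : b < 1) :
    Feasible (tightAlloc n k b) := by
  have hn : (0 : ℝ) < n := by exact_mod_cast hk.trans hkn
  have hk' : (1 : ℝ) ≤ k := by exact_mod_cast hk
  have hkn' : (k : ℝ) ≤ n := by exact_mod_cast hkn
  refine ⟨fun i r => mul_nonneg ((one_div_pos.2 hn).le.trans (one_div_le_tightShare hkn hb1.le i))
    (tightDemand_mem_Ioc i.pos hb0 hb1 i r).1.le, Fin.forall_fin_two.2 ⟨?_, ?_⟩⟩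
  all_goals rw [show ∑ i, tightAlloc n k b i _ = _ from sum_tight hk hkn fun w v => w * v _]
  · have hY := tightShare_zero_le_one hk hkn hb0.le
    simp only [Matrix.cons_val_zero]
    calc tightShare n k b 0 * ((1 - b) / n) + (k - 1) * (1 / n * (1 - b)) + (n - k) * (1 / n * 1)
        ≤ 1 * ((1 - b) / n) + (k - 1) * (1 / n * (1 - b)) + (n - k) * (1 / n * 1) := by
          gcongr
      _ = 1 - k * b / n := by field_simp; ring
      _ ≤ 1 := by linarith [div_nonneg (mul_nonneg (by linarith : (0 : ℝ) ≤ k) hb0.le) hn.le]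
  · simp only [Matrix.cons_val_one, Matrix.cons_val_zero, tightShare_zero]
    field_simp
    linarith

theorem tightAlloc_SI (hkn : k ≤ n) (hb0 : 0 < b) (hb1 : b < 1) :
    SI (tightInstance n k b) (tightAlloc n k b) := fun i => by
  rw [util_tightAlloc hkn hb0 hb1]; exact one_div_le_tightShare hkn hb1.le i

theorem tightAlloc_EF (hk : 1 ≤ k) (hkn : k ≤ n) (hb0 : 0 < b) (hb1 : b < 1) :
    EF (tightInstance n k b) (tightAlloc n k b) := by
  intro i j
  rcases eq_or_ne i j with rfl | hij
  · exact le_rfl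
  have hn : (0 : ℝ) < n := Nat.cast_pos.2 i.pos
  have hd := tightInstance_valid (n := n) (k := k) hb0 hb1
  have hA := tightAlloc_feasible hk hkn hb0 hb1
  rw [util_tightAlloc hkn hb0 hb1]
  refine le_trans ?_ (one_div_le_tightShare hkn hb1.le i)
  rcases eq_or_ne (j : ℕ) 0 with hj | hj
  · -- agent `j` holds little of resource `0`, which every other agent needs at rate `≥ 1 - b`
    have hi : (i : ℕ) ≠ 0 := fun hi => hij (Fin.ext (hi.trans hj.symm))
    have hdi := one_sub_le_tightDemand (n := n) (k := k) hb0.le hi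
    calc util (tightInstance n k b i) (tightAlloc n k b j)
        ≤ tightAlloc n k b j 0 / tightInstance n k b i 0 := util_le_div (hd.1 i 0).1 (hA.1 j 0)
      _ = tightShare n k b 0 * ((1 - b) / n) / tightDemand n k b i 0 := by
          simp [tightAlloc, tightInstance, hj, tightDemand_zero]
      _ ≤ 1 * ((1 - b) / n) / (1 - b) := by
          gcongr
          exact tightShare_zero_le_one hk hkn hb0.le
      _ = 1 / n := by field_simp [(sub_pos.2 hb1).ne']
  · obtain ⟨r, hr⟩ := hd.2 i
    calc util (tightInstance n k b i) (tightAlloc n k b j)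
        ≤ tightAlloc n k b j r := util_le_of_eq_one hr (hA.1 j r)
      _ = 1 / n * tightDemand n k b j r := by rw [tightAlloc, tightShare_of_ne_zero hj]
      _ ≤ 1 / n := mul_le_of_le_one_right (by positivity) (hd.1 j r).2

theorem SW_tightAlloc (hk : 1 ≤ k) (hkn : k ≤ n) (hb0 : 0 < b) (hb1 : b < 1) :
    SW (tightInstance n k b) (tightAlloc n k b) = 2 - k / n - (n - k) * b / n := by
  have hn : (n : ℝ) ≠ 0 := by have : 0 < n := hk.trans hkn; positivity
  rw [SW, sum_congr rfl fun i _ => util_tightAlloc hkn hb0 hb1 i]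
  rw [show _ = _ from sum_tight (b := b) hk hkn fun w _ => w, tightShare_zero]
  field_simp
  ring

theorem sum_tightInstance_zero (hk : 1 ≤ k) (hkn : k ≤ n) :
    ∑ j, tightInstance n k b j 0 = (1 - b) / n + (k - 1) * (1 - b) + (n - k) :=
  (sum_tight hk hkn fun _ v => v 0).trans (by simp)

end Tight

theorem Rat.exists_eq_natCast_div_natCast {α : ℚ} (hα : 0 < α) :
    ∃ p q : ℕ, 0 < p ∧ 0 < q ∧ α = p / q := by
  refine ⟨α.num.toNat, α.den, Int.lt_toNat.2 (Rat.num_pos.2 hα), α.den_pos, ?_⟩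
  have h := Rat.num_div_den α
  rw [← Int.toNat_of_nonneg (Rat.num_nonneg.2 hα.le), Int.cast_natCast] at h
  exact h.symm

theorem two_sub_sub_mul_SW_DRF_tightInstance_le {n k : ℕ} {b ε : ℝ} (hk : 1 ≤ k) (hkn : k ≤ n)
    (hb0 : 0 < b) (hb1 : b < 1) (hbε : 6 * b ≤ ε) (hεn : 4 ≤ ε * n) :
    (2 - k / n - ε) * SW (tightInstance n k b) (DRF (tightInstance n k b)) ≤
      SW (tightInstance n k b) (tightAlloc n k b) := by
  have hd := tightInstance_valid (n := n) (k := k) hb0 hb1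
  have hn : (0 : ℝ) < n := by exact_mod_cast hk.trans hkn
  have hk' : (1 : ℝ) ≤ k := by exact_mod_cast hk
  have hkn' : (k : ℝ) ≤ n := by exact_mod_cast hkn
  have hS := le_ciSup (Set.finite_range fun r => ∑ j, tightInstance n k b j r).bddAbove 0
  rw [sum_tightInstance_zero hk hkn] at hS
  rw [SW_DRF fun i r => (hd.1 i r).1, SW_tightAlloc hk hkn hb0 hb1]
  set S := ⨆ r, ∑ j, tightInstance n k b j r
  have hSW : 2 - k / n - b ≤ 2 - k / n - (n - k) * b / n := by
    have : (n - k) * b / n ≤ b := by rw [div_le_iff₀ hn]; nlinarith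
    linarith
  have hS' : n - 1 - n * b ≤ S := by nlinarith [div_nonneg (by linarith : 0 ≤ 1 - b) hn.le]
  have hSpos : 0 < S := by
    nlinarith [div_pos (sub_pos.2 hb1) hn, mul_nonneg (by linarith : 0 ≤ (k : ℝ) - 1)
      (by linarith : 0 ≤ 1 - b)]
  have ha0 : 0 ≤ (k : ℝ) / n := by positivity
  have ha1 : (k : ℝ) / n ≤ 1 := (div_le_one hn).2 hkn'
  rw [mul_div_assoc', div_le_iff₀ hSpos]
  calc (2 - k / n - ε) * n
      ≤ (2 - k / n - b) * (n - 1 - n * b) := by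
        nlinarith [mul_le_mul_of_nonneg_right hbε hn.le, mul_nonneg ha0 (mul_nonneg hn.le hb0.le),
          mul_nonneg (mul_self_nonneg b) hn.le]
    _ ≤ (2 - k / n - b) * S := mul_le_mul_of_nonneg_left hS' (by linarith)
    _ ≤ (2 - k / n - (n - k) * b / n) * S := mul_le_mul_of_nonneg_right hSW hSpos.le

theorem exists_two_sub_sub_mul_SW_DRF_le {α : ℚ} (hα0 : 0 < α) (hα1 : α ≤ 1) {ε : ℝ} (hε : 0 < ε) :
    ∃ (n : ℕ) (d : Fin n → Fin 2 → ℝ), 0 < n ∧ ValidInstance d ∧ MinorityRatio d α ∧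
      ∃ A : Fin n → Fin 2 → ℝ, Feasible A ∧ SI d A ∧ EF d A ∧
        ((2 : ℝ) - α - ε) * SW d (DRF d) ≤ SW d A := by
  obtain ⟨p, q, hp, hq, rfl⟩ := Rat.exists_eq_natCast_div_natCast hα0
  have hpq : p ≤ q := by
    rw [div_le_one (by exact_mod_cast hq)] at hα1; exact_mod_cast hα1
  obtain ⟨b, hb0, hb1, hbε⟩ : ∃ b : ℝ, 0 < b ∧ b < 1 ∧ 6 * b ≤ ε :=
    ⟨min ε 1 / 6, by positivity, by linarith [min_le_right ε 1], by linarith [min_le_left ε 1]⟩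
  obtain ⟨t, ht⟩ := exists_nat_gt (4 / ε)
  have ht0 : 0 < t := by exact_mod_cast (div_pos (by norm_num) hε).trans ht
  have hk : 1 ≤ p * t := Nat.one_le_iff_ne_zero.2 (by positivity)
  have hkn : p * t ≤ q * t := Nat.mul_le_mul_right t hpq
  have hεn : 4 ≤ ε * (q * t : ℕ) := by
    rw [div_lt_iff₀ hε] at ht
    have : (t : ℝ) ≤ (q * t : ℕ) := by exact_mod_cast Nat.le_mul_of_pos_left t hq
    nlinarith
  have hα : (((p / q : ℚ) : ℝ)) = (p * t : ℕ) / (q * t : ℕ) := by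
    push_cast; field_simp
  refine ⟨q * t, tightInstance (q * t) (p * t) b, by positivity, tightInstance_valid hb0 hb1, ?_,
    tightAlloc _ _ b, tightAlloc_feasible hk hkn hb0 hb1, tightAlloc_SI hkn hb0 hb1,
    tightAlloc_EF hk hkn hb0 hb1, ?_⟩
  · rw [MinorityRatio, card_G2_tightInstance hk hkn hb0]
    push_cast
    field_simp
  · rw [hα]
    exact two_sub_sub_mul_SW_DRF_tightInstance_le hk hkn hb0 hb1 hbε hεn

/-- With two resources, the fair approximation ratio for social welfare of DRF
over instances with minority ratio `α` equals `2 - α`. -/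
theorem drf_sw_fair_ratio (α : ℚ) (hα0 : 0 < α) (hα : α ≤ 1 / 2) :
    (∀ (n : ℕ) (d : Fin n → Fin 2 → ℝ), 0 < n → ValidInstance d → MinorityRatio d α →
      ∀ A : Fin n → Fin 2 → ℝ, Feasible A → SI d A → EF d A →
        SW d A ≤ ((2 : ℝ) - (α : ℝ)) * SW d (DRF d)) ∧
    (∀ ε : ℝ, 0 < ε → ∃ (n : ℕ) (d : Fin n → Fin 2 → ℝ), 0 < n ∧
      ValidInstance d ∧ MinorityRatio d α ∧
      ∃ A : Fin n → Fin 2 → ℝ, Feasible A ∧ SI d A ∧ EF d A ∧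
        ((2 : ℝ) - (α : ℝ) - ε) * SW d (DRF d) ≤ SW d A) :=
  ⟨fun _ _ hn hd hmr _ hA hSI _ => SW_le_two_sub_mul_SW_DRF hα hn hd hmr hA hSI,
    fun _ hε => exists_two_sub_sub_mul_SW_DRF_le hα0 (hα.trans (by norm_num)) hε⟩
end

section
/- With m = 2 resources, for every rational α ∈ (0, 1/2], the fair approximation ratio for utilization of the DRF mechanism over instances with minority ratio α equals 1/α. Precisely: (i) for every instance with minority ratio α, the DRF allocation has utilization at least α, so every feasible allocation satisfying SI and EF has utilization at most (1/α) times that of the DRF allocation; and (ii) for every ε > 0 there exists an instance with minority ratio α and a feasible allocation satisfying SI and EF whose utilization is at least (1/α − ε) times the utilization of the DRF allocation. -/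
open Finset
open scoped Classical

/-!
Agents of `G1` demand all of resource 1 and (with two resources) agents of `G2` all of
resource 2, so each resource is demanded at least `min |G1| |G2| = α n` in total, and at most
`n`. DRF scales the total demand vector until it hits capacity, so its utilization is at least
`α n / n = α`, while no feasible allocation utilizes more than `1`.

For tightness take `α n` agents demanding `(1 - δ, 1)` and the others `(1, δ)`. DRF utilizes
`(α + (1 - α) δ) / (1 - α δ) ≈ α`. Giving every agent exactly utility `1/n` and handing the
rest of resource 2 to the minority is SI and EF, because each type values the other type's
bundle at most `1/n`, and it utilizes `1 - α δ ≈ 1`. Any `δ ≤ ε α²` makes the ratio at least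
`1/α - ε`.
-/

theorem ciInf_fin_two {α : Type*} [ConditionallyCompleteLinearOrder α] (f : Fin 2 → α) :
    ⨅ r, f r = min (f 0) (f 1) := by
  rw [iInf, ← csInf_pair, ← Matrix.range_cons_cons_empty (f 0) (f 1) ![]]
  congr; ext r; fin_cases r <;> rfl

theorem ciSup_fin_two {α : Type*} [ConditionallyCompleteLinearOrder α] (f : Fin 2 → α) :
    ⨆ r, f r = max (f 0) (f 1) := by
  rw [iSup, ← csSup_pair, ← Matrix.range_cons_cons_empty (f 0) (f 1) ![]]
  congr; ext r; fin_cases r <;> rfl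

theorem Fin.sum_ite_val_lt {R : Type*} [Ring R] {n k : ℕ} (hk : k ≤ n) (x y : R) :
    ∑ i : Fin n, (if (i : ℕ) < k then x else y) = k * x + (n - k) * y := by
  rw [sum_ite, Finset.sum_const, Finset.sum_const, filter_not,
    card_sdiff_of_subset (filter_subset _ _), Fin.card_filter_val_lt, min_eq_right hk]
  simp [hk, nsmul_eq_mul]

theorem card_le_sum_of_one_le {ι R : Type*} [Fintype ι] [Semiring R] [PartialOrder R]
    [IsOrderedAddMonoid R] {s : Finset ι} {f : ι → R} (hf : ∀ i, 0 ≤ f i)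
    (hs : ∀ i ∈ s, 1 ≤ f i) : (#s : R) ≤ ∑ i, f i := by
  simpa using (card_nsmul_le_sum s f 1 hs).trans (sum_le_univ_sum_of_nonneg hf)

theorem Rat.exists_natCast_eq_mul {α : ℚ} (hα : 0 < α) :
    ∃ n k : ℕ, 0 < n ∧ 0 < k ∧ (k : ℚ) = α * n :=
  ⟨α.den, α.num.natAbs, α.den_pos, Int.natAbs_pos.2 (Rat.num_pos.2 hα).ne', by
    rw [Rat.mul_den_eq_num, Nat.cast_natAbs, abs_of_nonneg (Rat.num_nonneg.2 hα.le)]⟩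

theorem one_div_sub_mul_div_le {a ε δ : ℝ} (ha : 0 < a) (ha2 : a ≤ 1 / 2) (hε : 0 ≤ ε)
    (hδ : 0 ≤ δ) (hδ1 : δ < 1) (hδε : δ ≤ ε * a ^ 2) :
    (1 / a - ε) * ((a + (1 - a) * δ) / (1 - a * δ)) ≤ 1 - a * δ := by
  have hpos : 0 < 1 - a * δ := by nlinarith
  rw [← mul_div_assoc, div_le_iff₀ hpos, show 1 / a - ε = (1 - ε * a) / a by field_simp,
    div_mul_eq_mul_div, div_le_iff₀ ha]
  -- The two sides differ by `(ε a² - δ) + a δ (1 - 2a) + ε a (1 - a) δ + a³ δ²`.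
  linarith [mul_nonneg (mul_nonneg ha.le hδ) (by linarith : (0 : ℝ) ≤ 1 - 2 * a),
    mul_nonneg (mul_nonneg (mul_nonneg hε ha.le) (by linarith : (0 : ℝ) ≤ 1 - a)) hδ,
    mul_nonneg (pow_nonneg ha.le 3) (sq_nonneg δ)]

section Leontief

variable {m : ℕ} {dv Av : Fin m → ℝ}

theorem util_eq_of_le_of_eq {y : ℝ} {r : Fin m} (hy : 0 ≤ y) (hle : ∀ s, y * dv s ≤ Av s)
    (hd : 0 < dv r) (heq : y * dv r = Av r) : util dv Av = y := by
  refine le_antisymm ?_ (le_csSup ⟨Av r / dv r, fun _ hz => (le_div_iff₀ hd).2 (hz.2 r)⟩ ⟨hy, hle⟩)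
  calc util dv Av ≤ Av r / dv r := util_le_div hd (heq ▸ mul_nonneg hy hd.le)
    _ = y := by rw [← heq, mul_div_cancel_right₀ _ hd.ne']

end Leontief

section Utilization

variable {n m : ℕ}

theorem Feasible.Util_le_one [NeZero m] {A : Fin n → Fin m → ℝ} (hA : Feasible A) : Util A ≤ 1 :=
  (ciInf_le (Set.finite_range _).bddBelow 0).trans (hA.2 0)

theorem Util_fin_two (A : Fin n → Fin 2 → ℝ) : Util A = min (∑ i, A i 0) (∑ i, A i 1) :=
  ciInf_fin_two _

theorem Util_DRF {d : Fin n → Fin m → ℝ} (hd : ∀ i r, 0 ≤ d i r) :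
    Util (DRF d) = (⨅ r, ∑ j, d j r) / ⨆ r, ∑ j, d j r := by
  have hx : 0 ≤ 1 / ⨆ r, ∑ j, d j r :=
    one_div_nonneg.2 (Real.iSup_nonneg fun r => sum_nonneg fun j _ => hd j r)
  simp only [Util, DRF, ← mul_sum]
  rw [← Real.mul_iInf_of_nonneg hx, one_div_mul_eq_div]

theorem div_le_Util_DRF [NeZero m] {d : Fin n → Fin m → ℝ} (hd : ∀ i r, 0 ≤ d i r) {a b : ℝ}
    (ha : 0 < a) (hlow : ∀ r, a ≤ ∑ j, d j r) (hup : ∀ r, ∑ j, d j r ≤ b) :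
    a / b ≤ Util (DRF d) := by
  rw [Util_DRF hd]
  have hinf : a ≤ ⨅ r, ∑ j, d j r := le_ciInf hlow
  exact div_le_div₀ (ha.le.trans hinf) hinf
    (ha.trans_le ((hlow 0).trans
      (le_ciSup (f := fun r => ∑ j, d j r) (Set.finite_range _).bddAbove 0))) (ciSup_le hup)

theorem Util_DRF_of_sum_le {d : Fin n → Fin 2 → ℝ} (hd : ∀ i r, 0 ≤ d i r)
    (h : ∑ j, d j 1 ≤ ∑ j, d j 0) : Util (DRF d) = (∑ j, d j 1) / ∑ j, d j 0 := by
  rw [Util_DRF hd, ciInf_fin_two, ciSup_fin_two, min_eq_right h, max_eq_left h]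

end Utilization

section Groups

variable {n m : ℕ}

theorem ValidInstance.nonneg {d : Fin n → Fin m → ℝ} (hd : ValidInstance d) (i : Fin n)
    (r : Fin m) : 0 ≤ d i r :=
  (hd.1 i r).1.le

theorem ValidInstance.sum_le {d : Fin n → Fin m → ℝ} (hd : ValidInstance d) (r : Fin m) :
    ∑ j, d j r ≤ n := by
  simpa using sum_le_sum fun j (_ : j ∈ univ) => (hd.1 j r).2

theorem card_G1_add_card_G2 [NeZero m] {d : Fin n → Fin m → ℝ} (hd : ∀ i, d i 0 ≤ 1) :
    #(G1 d) + #(G2 d) = n := by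
  have hG2 : G2 d = univ.filter (fun i => ¬ d i 0 = 1) :=
    filter_congr fun i _ => ⟨ne_of_lt, fun h => lt_of_le_of_ne (hd i) h⟩
  rw [hG2, G1, card_filter_add_card_filter_not, card_univ, Fintype.card_fin]

theorem ValidInstance.eq_one_of_mem_G2 {d : Fin n → Fin 2 → ℝ} (hd : ValidInstance d) {j : Fin n}
    (hj : j ∈ G2 d) : d j 1 = 1 := by
  obtain ⟨r, hr⟩ := hd.2 j
  fin_cases r
  · exact absurd hr (mem_filter.1 hj).2.ne
  · exact hr

end Groups

theorem le_Util_DRF_of_minorityRatio {n : ℕ} (hn : 0 < n) {α : ℚ} (hα0 : 0 < α) (hα : α ≤ 1 / 2)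
    {d : Fin n → Fin 2 → ℝ} (hd : ValidInstance d) (hM : MinorityRatio d α) :
    (α : ℝ) ≤ Util (DRF d) := by
  have hαR : (α : ℝ) ≤ 1 / 2 := by
    simpa using (Rat.cast_le (K := ℝ)).2 hα
  have hG2 : (#(G2 d) : ℝ) = α * n := by exact_mod_cast hM
  have hG1 : (#(G1 d) : ℝ) = n - α * n := by
    have hcard : (#(G1 d) + #(G2 d) : ℝ) = n := by
      exact_mod_cast card_G1_add_card_G2 fun i => (hd.1 i 0).2
    linarith
  have hlow : ∀ r, (α : ℝ) * n ≤ ∑ j, d j r := by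
    intro r
    fin_cases r
    · calc (α : ℝ) * n ≤ #(G1 d) := by rw [hG1]; nlinarith
        _ ≤ ∑ j, d j 0 :=
          card_le_sum_of_one_le (hd.nonneg · 0) fun j hj => (mem_filter.1 hj).2.ge
    · exact hG2 ▸ card_le_sum_of_one_le (hd.nonneg · 1) fun j hj => (hd.eq_one_of_mem_G2 hj).ge
  have hnR : (0 : ℝ) < n := by exact_mod_cast hn
  simpa [hnR.ne'] using div_le_Util_DRF hd.nonneg (by positivity) hlow hd.sum_le

def twoTypeDemand {n : ℕ} (k : ℕ) (δ : ℝ) : Fin n → Fin 2 → ℝ :=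
  fun i => if (i : ℕ) < k then ![1 - δ, 1] else ![1, δ]

noncomputable def twoTypeAlloc {n : ℕ} (k : ℕ) (δ : ℝ) : Fin n → Fin 2 → ℝ :=
  fun i => if (i : ℕ) < k then ![(1 - δ) / n, (n - (n - k) * δ) / (k * n)] else ![1 / n, δ / n]

section TwoTypeInstance

variable {n k : ℕ} {δ : ℝ}

theorem validInstance_twoTypeDemand (h0 : 0 < δ) (h1 : δ < 1) :
    ValidInstance (twoTypeDemand (n := n) k δ) := by
  refine ⟨fun i => Fin.forall_fin_two.2 ?_, fun i => ?_⟩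
  · by_cases hi : (i : ℕ) < k <;> simp [twoTypeDemand, hi, h0, h1, h0.le, h1.le]
  · by_cases hi : (i : ℕ) < k
    · exact ⟨1, by simp [twoTypeDemand, hi]⟩
    · exact ⟨0, by simp [twoTypeDemand, hi]⟩

theorem card_G2_twoTypeDemand (h0 : 0 < δ) (hk : k ≤ n) :
    #(G2 (twoTypeDemand (n := n) k δ)) = k := by
  have hG2 : G2 (twoTypeDemand (n := n) k δ) = univ.filter (fun i : Fin n => (i : ℕ) < k) :=
    filter_congr fun i _ => by by_cases hi : (i : ℕ) < k <;> simp [twoTypeDemand, hi, h0]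
  rw [hG2, Fin.card_filter_val_lt, min_eq_right hk]

theorem sum_twoTypeDemand_zero (hk : k ≤ n) :
    ∑ j, twoTypeDemand (n := n) k δ j 0 = n - k * δ := by
  simp only [twoTypeDemand, ite_apply, Matrix.cons_val_zero]
  rw [Fin.sum_ite_val_lt hk]; ring

theorem sum_twoTypeDemand_one (hk : k ≤ n) :
    ∑ j, twoTypeDemand (n := n) k δ j 1 = k + (n - k) * δ := by
  simp only [twoTypeDemand, ite_apply, Matrix.cons_val_one, Matrix.cons_val_zero]
  rw [Fin.sum_ite_val_lt hk]; ring

theorem sum_twoTypeAlloc_zero (hn : 0 < n) (hk : k ≤ n) :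
    ∑ i, twoTypeAlloc (n := n) k δ i 0 = 1 - k / n * δ := by
  have hn : (n : ℝ) ≠ 0 := by exact_mod_cast hn.ne'
  simp only [twoTypeAlloc, ite_apply, Matrix.cons_val_zero]
  rw [Fin.sum_ite_val_lt hk]; field_simp; ring

theorem sum_twoTypeAlloc_one (hk0 : 0 < k) (hk : k ≤ n) :
    ∑ i, twoTypeAlloc (n := n) k δ i 1 = 1 := by
  have hn : (n : ℝ) ≠ 0 := by exact_mod_cast (hk0.trans_le hk).ne'
  have hk0 : (k : ℝ) ≠ 0 := by exact_mod_cast hk0.ne'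
  simp only [twoTypeAlloc, ite_apply, Matrix.cons_val_one, Matrix.cons_val_zero]
  rw [Fin.sum_ite_val_lt hk]; field_simp; ring

theorem feasible_twoTypeAlloc (hk0 : 0 < k) (hk : k ≤ n) (h0 : 0 ≤ δ) (h1 : δ ≤ 1) :
    Feasible (twoTypeAlloc (n := n) k δ) := by
  have hkn : (k : ℝ) ≤ n := by exact_mod_cast hk
  refine ⟨fun i => Fin.forall_fin_two.2 ?_, Fin.forall_fin_two.2 ⟨?_, ?_⟩⟩
  · by_cases hi : (i : ℕ) < k
    · simp only [twoTypeAlloc, if_pos hi, Matrix.cons_val_zero, Matrix.cons_val_one]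
      exact ⟨div_nonneg (by linarith) n.cast_nonneg, div_nonneg (by nlinarith) (by positivity)⟩
    · simp only [twoTypeAlloc, if_neg hi, Matrix.cons_val_zero, Matrix.cons_val_one]
      exact ⟨by positivity, by positivity⟩
  · have : 0 ≤ (k : ℝ) / n * δ := by positivity
    linarith [sum_twoTypeAlloc_zero (δ := δ) (hk0.trans_le hk) hk]
  · exact (sum_twoTypeAlloc_one hk0 hk).le

theorem util_twoTypeAlloc_self (h1 : δ < 1) (hk : k ≤ n) (i : Fin n) :
    util (twoTypeDemand k δ i) (twoTypeAlloc k δ i) = 1 / n := by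
  have hn : (0 : ℝ) < n := by exact_mod_cast i.pos
  by_cases hi : (i : ℕ) < k
  · have hk0 : (0 : ℝ) < k := by exact_mod_cast (Nat.zero_le _).trans_lt hi
    have hkn : (k : ℝ) ≤ n := by exact_mod_cast hk
    have hc : 1 / n ≤ (n - (n - k) * δ) / (k * n) := by
      rw [div_le_div_iff₀ hn (by positivity)]
      nlinarith [mul_nonneg (mul_nonneg hn.le (sub_nonneg.2 hkn)) (sub_nonneg.2 h1.le)]
    simp only [twoTypeDemand, twoTypeAlloc, if_pos hi]
    refine util_eq_of_le_of_eq (r := 0) (by positivity) (Fin.forall_fin_two.2 ⟨?_, ?_⟩) ?_ ?_ <;>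
      simp only [Matrix.cons_val_zero, Matrix.cons_val_one]
    · exact (one_div_mul_eq_div _ _).le
    · rwa [mul_one]
    · linarith
    · exact one_div_mul_eq_div _ _
  · simp only [twoTypeDemand, twoTypeAlloc, if_neg hi]
    refine util_eq_of_le_of_eq (r := 0) (by positivity) (Fin.forall_fin_two.2 ⟨?_, ?_⟩) ?_ ?_ <;>
      simp only [Matrix.cons_val_zero, Matrix.cons_val_one]
    · rw [mul_one]
    · exact (one_div_mul_eq_div _ _).le
    · exact one_pos
    · exact mul_one _

theorem util_twoTypeAlloc_le (h0 : 0 < δ) (h1 : δ < 1) (hk : k ≤ n) (i j : Fin n) :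
    util (twoTypeDemand k δ i) (twoTypeAlloc k δ j) ≤ 1 / n := by
  have hn : (0 : ℝ) < n := by exact_mod_cast i.pos
  by_cases hi : (i : ℕ) < k <;> by_cases hj : (j : ℕ) < k
  · rw [show twoTypeAlloc k δ j = twoTypeAlloc k δ i by simp [twoTypeAlloc, hi, hj]]
    exact (util_twoTypeAlloc_self h1 hk i).le
  · simp only [twoTypeDemand, twoTypeAlloc, if_pos hi, if_neg hj]
    calc _ ≤ δ / n / 1 := util_le_div (r := 1) one_pos (div_nonneg h0.le hn.le)
      _ ≤ 1 / n := by rw [div_one]; gcongr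
  · simp only [twoTypeDemand, twoTypeAlloc, if_neg hi, if_pos hj]
    calc _ ≤ (1 - δ) / n / 1 := util_le_div (r := 0) one_pos (div_nonneg (by linarith) hn.le)
      _ ≤ 1 / n := by rw [div_one]; gcongr; linarith
  · rw [show twoTypeAlloc k δ j = twoTypeAlloc k δ i by simp [twoTypeAlloc, hi, hj]]
    exact (util_twoTypeAlloc_self h1 hk i).le

theorem SI_twoTypeAlloc (h1 : δ < 1) (hk : k ≤ n) :
    SI (twoTypeDemand (n := n) k δ) (twoTypeAlloc k δ) :=
  fun i => (util_twoTypeAlloc_self h1 hk i).ge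

theorem EF_twoTypeAlloc (h0 : 0 < δ) (h1 : δ < 1) (hk : k ≤ n) :
    EF (twoTypeDemand (n := n) k δ) (twoTypeAlloc k δ) := fun i j => by
  rw [util_twoTypeAlloc_self h1 hk i]
  exact util_twoTypeAlloc_le h0 h1 hk i j

theorem Util_twoTypeAlloc (hk0 : 0 < k) (hk : k ≤ n) (h0 : 0 ≤ δ) :
    Util (twoTypeAlloc (n := n) k δ) = 1 - k / n * δ := by
  rw [Util_fin_two, sum_twoTypeAlloc_zero (hk0.trans_le hk) hk, sum_twoTypeAlloc_one hk0 hk]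
  exact min_eq_left (sub_le_self _ (by positivity))

theorem Util_DRF_twoTypeDemand (hn : 0 < n) (hk : 2 * k ≤ n) (h0 : 0 < δ) (h1 : δ ≤ 1 / 2) :
    Util (DRF (twoTypeDemand (n := n) k δ)) = (k / n + (1 - k / n) * δ) / (1 - k / n * δ) := by
  have hkn : k ≤ n := by omega
  have hkR : 2 * (k : ℝ) ≤ n := by exact_mod_cast hk
  have hn : (0 : ℝ) < n := by exact_mod_cast hn
  have hsum : ∑ j, twoTypeDemand (n := n) k δ j 1 ≤ ∑ j, twoTypeDemand (n := n) k δ j 0 := by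
    rw [sum_twoTypeDemand_zero hkn, sum_twoTypeDemand_one hkn]; nlinarith
  rw [Util_DRF_of_sum_le (validInstance_twoTypeDemand h0 (by linarith)).nonneg hsum,
    sum_twoTypeDemand_zero hkn, sum_twoTypeDemand_one hkn]
  field_simp

end TwoTypeInstance

/-- With two resources, the fair approximation ratio for utilization of DRF
over instances with minority ratio `α` equals `1 / α`. -/
theorem drf_util_fair_ratio (α : ℚ) (hα0 : 0 < α) (hα : α ≤ 1 / 2) :
    (∀ (n : ℕ) (d : Fin n → Fin 2 → ℝ), 0 < n → ValidInstance d → MinorityRatio d α →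
      ((α : ℝ) ≤ Util (DRF d)) ∧
      ∀ A : Fin n → Fin 2 → ℝ, Feasible A → SI d A → EF d A →
        Util A ≤ (1 / (α : ℝ)) * Util (DRF d)) ∧
    (∀ ε : ℝ, 0 < ε → ∃ (n : ℕ) (d : Fin n → Fin 2 → ℝ), 0 < n ∧
      ValidInstance d ∧ MinorityRatio d α ∧
      ∃ A : Fin n → Fin 2 → ℝ, Feasible A ∧ SI d A ∧ EF d A ∧
        (1 / (α : ℝ) - ε) * Util (DRF d) ≤ Util A) := by
  have hαR0 : (0 : ℝ) < α := by exact_mod_cast hα0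
  have hαR : (α : ℝ) ≤ 1 / 2 := by simpa using (Rat.cast_le (K := ℝ)).2 hα
  refine ⟨fun n d hn hd hM => ?_, fun ε hε => ?_⟩
  · have hDRF := le_Util_DRF_of_minorityRatio hn hα0 hα hd hM
    refine ⟨hDRF, fun A hA _ _ => ?_⟩
    calc Util A ≤ 1 := hA.Util_le_one
      _ = 1 / α * α := by field_simp
      _ ≤ 1 / α * Util (DRF d) := by gcongr
  · obtain ⟨n, k, hn, hk0, hkα⟩ := Rat.exists_natCast_eq_mul hα0
    have hk : 2 * k ≤ n := by
      have : (2 * k : ℚ) ≤ n := by rw [hkα]; nlinarith [(Nat.cast_pos (α := ℚ)).2 hn]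
      exact_mod_cast this
    have hkn : (k : ℝ) / n = α := by
      rw [div_eq_iff (by positivity)]; exact_mod_cast hkα
    set δ : ℝ := min (1 / 2) (ε * α ^ 2)
    have hδ0 : 0 < δ := lt_min (by norm_num) (by positivity)
    have hδ1 : δ ≤ 1 / 2 := min_le_left _ _
    refine ⟨n, twoTypeDemand k δ, hn, validInstance_twoTypeDemand hδ0 (by linarith), ?_,
      twoTypeAlloc k δ, feasible_twoTypeAlloc hk0 (by omega) hδ0.le (by linarith),
      SI_twoTypeAlloc (by linarith) (by omega), EF_twoTypeAlloc hδ0 (by linarith) (by omega), ?_⟩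
    · rw [MinorityRatio, card_G2_twoTypeDemand hδ0 (by omega), hkα]
    · rw [Util_DRF_twoTypeDemand hn hk hδ0 hδ1, Util_twoTypeAlloc hk0 (by omega) hδ0.le, hkn]
      exact one_div_sub_mul_div_le hαR0 hαR hε.le hδ0.le (by linarith) (min_le_right _ _)
end
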